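/- Symmetric case simplification: assume in addition that μ and n are both invariant under the map x ↦ −x. Then the condition D_μ(∞) = G_μ(−∞) holds automatically, and for every y ≥ 0 one has ψ₊(y) = ψ₋(y) = ∫_{[0,y]} (2 · μ̄(s) · n([s,∞)))⁻¹ dμ(s). -/

import Mathlib

open MeasureTheory Filter
open scoped ENNReal Topology Classical

/-- Topological support of a Borel measure on ℝ. -/
def measSupport (μ : MeasureTheory.Measure ℝ) : Set ℝ :=
  {x | ∀ U : Set ℝ, IsOpen U → x ∈ U → 0 < μ U}

/-- `D_μ(y) = ∫_{[0,y]} n([s,∞))⁻¹ dμ(s)` for `y ≥ 0` (equal to `0` for `y < 0`). -/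
noncomputable def Dmu (μ n : MeasureTheory.Measure ℝ) (y : ℝ) : ℝ≥0∞ :=
  ∫⁻ s in Set.Icc (0 : ℝ) y, (n (Set.Ici s))⁻¹ ∂μ

/-- `G_μ(x) = ∫_{[x,0]} n((−∞,s])⁻¹ dμ(s)` for `x ≤ 0` (equal to `0` for `x > 0`). -/
noncomputable def Gmu (μ n : MeasureTheory.Measure ℝ) (x : ℝ) : ℝ≥0∞ :=
  ∫⁻ s in Set.Icc x (0 : ℝ), (n (Set.Iic s))⁻¹ ∂μ

/-- The set `{y ≥ 0 : D_μ(y) > v}`; its infimum is the right-continuous inverse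
`D_μ⁻¹(v)`, with `D_μ⁻¹(v) = ∞` when the set is empty. -/
def DinvSet (μ n : MeasureTheory.Measure ℝ) (v : ℝ≥0∞) : Set ℝ :=
  {y : ℝ | 0 ≤ y ∧ v < Dmu μ n y}

/-- The set `{x ≤ 0 : G_μ(x) > v}`; its supremum is the right-continuous inverse
`G_μ⁻¹(v)`, with `G_μ⁻¹(v) = −∞` when the set is empty. -/
def GinvSet (μ n : MeasureTheory.Measure ℝ) (v : ℝ≥0∞) : Set ℝ :=
  {x : ℝ | x ≤ 0 ∧ v < Gmu μ n x}

/-- `μ̄(D_μ⁻¹(v))`, with the convention `μ̄(∞) = 0`. -/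
noncomputable def mubarDinv (μ n : MeasureTheory.Measure ℝ) (v : ℝ≥0∞) : ℝ :=
  if (DinvSet μ n v).Nonempty then (μ (Set.Ici (sInf (DinvSet μ n v)))).toReal else 0

/-- `μ̄(G_μ⁻¹(v))`, with the convention `μ̄(−∞) = 1`. -/
noncomputable def mubarGinv (μ n : MeasureTheory.Measure ℝ) (v : ℝ≥0∞) : ℝ :=
  if (GinvSet μ n v).Nonempty then (μ (Set.Ici (sSup (GinvSet μ n v)))).toReal else 1

/-- `n([D_μ⁻¹(v),∞))`, with the convention that it is `0` when `D_μ⁻¹(v) = ∞`. -/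
noncomputable def nDinv (μ n : MeasureTheory.Measure ℝ) (v : ℝ≥0∞) : ℝ≥0∞ :=
  if (DinvSet μ n v).Nonempty then n (Set.Ici (sInf (DinvSet μ n v))) else 0

/-- `n((−∞,G_μ⁻¹(v)])`, with the convention that it is `0` when `G_μ⁻¹(v) = −∞`. -/
noncomputable def nGinv (μ n : MeasureTheory.Measure ℝ) (v : ℝ≥0∞) : ℝ≥0∞ :=
  if (GinvSet μ n v).Nonempty then n (Set.Iic (sSup (GinvSet μ n v))) else 0

/-- The integrand `[n([s,∞)) · (1 + μ̄(s) − μ̄(G_μ⁻¹(D_μ(s))))]⁻¹` of `ψ₊`. -/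
noncomputable def psiPlusIntegrand (μ n : MeasureTheory.Measure ℝ) (s : ℝ) : ℝ≥0∞ :=
  (n (Set.Ici s) *
    ENNReal.ofReal (1 + (μ (Set.Ici s)).toReal - mubarGinv μ n (Dmu μ n s)))⁻¹

/-- `ψ₊(y) = ∫_{[0,y]} [n([s,∞)) · (1 + μ̄(s) − μ̄(G_μ⁻¹(D_μ(s))))]⁻¹ dμ(s)`. -/
noncomputable def psiPlus (μ n : MeasureTheory.Measure ℝ) (y : ℝ) : ℝ≥0∞ :=
  ∫⁻ s in Set.Icc (0 : ℝ) y, psiPlusIntegrand μ n s ∂μ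

/-- The integrand `[n((−∞,s]) · (1 + μ̄(D_μ⁻¹(G_μ(s))) − μ̄(s))]⁻¹` of `ψ₋`. -/
noncomputable def psiMinusIntegrand (μ n : MeasureTheory.Measure ℝ) (s : ℝ) : ℝ≥0∞ :=
  (n (Set.Iic s) *
    ENNReal.ofReal (1 + mubarDinv μ n (Gmu μ n s) - (μ (Set.Ici s)).toReal))⁻¹

/-- `ψ₋(z) = ∫_{[−z,0]} [n((−∞,s]) · (1 + μ̄(D_μ⁻¹(G_μ(s))) − μ̄(s))]⁻¹ dμ(s)`. -/
noncomputable def psiMinus (μ n : MeasureTheory.Measure ℝ) (z : ℝ) : ℝ≥0∞ :=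
  ∫⁻ s in Set.Icc (-z) (0 : ℝ), psiMinusIntegrand μ n s ∂μ

/-- The set `{y ≥ 0 : ψ₊(y) ≥ l}` whose infimum is the left-continuous inverse `φ₊(l)`. -/
def phiPlusSet (μ n : MeasureTheory.Measure ℝ) (l : ℝ) : Set ℝ :=
  {y : ℝ | 0 ≤ y ∧ ENNReal.ofReal l ≤ psiPlus μ n y}

/-- The set `{z ≥ 0 : ψ₋(z) ≥ l}` whose infimum is the left-continuous inverse `φ₋(l)`. -/
def phiMinusSet (μ n : MeasureTheory.Measure ℝ) (l : ℝ) : Set ℝ :=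
  {z : ℝ | 0 ≤ z ∧ ENNReal.ofReal l ≤ psiMinus μ n z}

/-- `φ₊(l) = inf{y ≥ 0 : ψ₊(y) ≥ l}`. -/
noncomputable def phiPlus (μ n : MeasureTheory.Measure ℝ) (l : ℝ) : ℝ :=
  sInf (phiPlusSet μ n l)

/-- `φ₋(l) = inf{z ≥ 0 : ψ₋(z) ≥ l}`. -/
noncomputable def phiMinus (μ n : MeasureTheory.Measure ℝ) (l : ℝ) : ℝ :=
  sInf (phiMinusSet μ n l)

/-- `n([φ₊(l),∞))`, with the convention that it is `0` when `φ₊(l) = inf ∅ = ∞`. -/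
noncomputable def nPhiPlus (μ n : MeasureTheory.Measure ℝ) (l : ℝ) : ℝ≥0∞ :=
  if (phiPlusSet μ n l).Nonempty then n (Set.Ici (phiPlus μ n l)) else 0

/-- `n((−∞,−φ₋(l)])`, with the convention that it is `0` when `φ₋(l) = inf ∅ = ∞`. -/
noncomputable def nPhiMinus (μ n : MeasureTheory.Measure ℝ) (l : ℝ) : ℝ≥0∞ :=
  if (phiMinusSet μ n l).Nonempty then n (Set.Iic (-(phiMinus μ n l))) else 0

/-- `∫₀^L [n((−∞,−φ₋(s)]) + n([φ₊(s),∞))] ds` for an upper limit `L ∈ [0,∞]`. -/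
noncomputable def cutInt (μ n : MeasureTheory.Measure ℝ) (L : ℝ≥0∞) : ℝ≥0∞ :=
  ∫⁻ s in {s : ℝ | 0 < s ∧ ENNReal.ofReal s < L},
    (nPhiMinus μ n s + nPhiPlus μ n s)

/-- `exp(−a)` for `a ∈ [0,∞]`, with `exp(−∞) = 0`. -/
noncomputable def expNegE (a : ℝ≥0∞) : ℝ :=
  if a = ⊤ then 0 else Real.exp (-a.toReal)

/-- `ρ(l) = exp(−∫₀^l [n((−∞,−φ₋(s)]) + n([φ₊(s),∞))] ds)`. -/
noncomputable def rho (μ n : MeasureTheory.Measure ℝ) (l : ℝ) : ℝ≥0∞ :=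
  ENNReal.ofReal (expNegE (cutInt μ n (ENNReal.ofReal l)))

/-!
Reflecting through `x ↦ -x` exchanges the two halves of the construction: `G_μ(x) = D_μ(-x)`,
so `G_μ⁻¹ = -D_μ⁻¹` and, as `μ` has no atoms, `μ̄(G_μ⁻¹(v)) = 1 - μ̄(D_μ⁻¹(v))`. This gives the
first claim and shows that the integrand of `ψ₋` at `s` is that of `ψ₊` at `-s`. For `s ≥ 0` the
integrand of `D_μ` is positive, so `D_μ` can only be flat on a `μ`-null stretch after `s`; hence
`μ̄(D_μ⁻¹(D_μ(s))) = μ̄(s)` and the integrand of `ψ₊` is `(2 μ̄(s) n([s,∞)))⁻¹`.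
-/

open Set

section NegInvariant

variable {m : Measure ℝ} [m.IsNegInvariant]

lemma measure_Ici_eq_measure_Iic_neg (t : ℝ) : m (Ici t) = m (Iic (-t)) := by
  rw [← m.measure_neg, neg_Ici]

lemma setLIntegral_Icc_eq_neg (f : ℝ → ℝ≥0∞) (a b : ℝ) :
    ∫⁻ x in Icc a b, f x ∂m = ∫⁻ x in Icc (-b) (-a), f (-x) ∂m := by
  rw [← (m.measurePreserving_neg).setLIntegral_comp_preimage_emb
    (MeasurableEquiv.neg ℝ).measurableEmbedding, neg_preimage, neg_Icc]

end NegInvariant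

lemma toReal_measure_Iic_eq_one_sub {μ : Measure ℝ} [IsProbabilityMeasure μ] [NullSingletonClass μ]
    (t : ℝ) : (μ (Iic t)).toReal = 1 - (μ (Ici t)).toReal := by
  rw [← compl_Ioi, prob_compl_eq_one_sub measurableSet_Ioi, measure_congr Ioi_ae_eq_Ici,
    ENNReal.toReal_sub_of_le prob_le_one ENNReal.one_ne_top, ENNReal.toReal_one]

lemma measure_Ioo_eq_zero_of_forall_Ioc {μ : Measure ℝ} {s r : ℝ}
    (h : ∀ t ∈ Ioo s r, μ (Ioc s t) = 0) : μ (Ioo s r) = 0 := by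
  have hcover : Ioo s r ⊆ ⋃ (q : ℚ) (_ : (q : ℝ) ∈ Ioo s r), Ioc s (q : ℝ) := fun x hx => by
    obtain ⟨q, hxq, hqr⟩ := exists_rat_btwn hx.2
    exact mem_iUnion₂.2 ⟨q, ⟨hx.1.trans hxq, hqr⟩, hx.1, hxq.le⟩
  exact measure_mono_null hcover (measure_iUnion_null fun q => measure_iUnion_null (h q))

lemma measure_Ioi_eq_zero_of_forall_Ioc {μ : Measure ℝ} {s : ℝ}
    (h : ∀ t, s < t → μ (Ioc s t) = 0) : μ (Ioi s) = 0 := by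
  have hcover : Ioi s ⊆ ⋃ q : ℚ, Ioo s (q : ℝ) := fun x hx => by
    obtain ⟨q, hxq⟩ := exists_rat_gt x
    exact mem_iUnion.2 ⟨q, hx, hxq⟩
  exact measure_mono_null hcover (measure_iUnion_null fun q =>
    measure_Ioo_eq_zero_of_forall_Ioc fun t ht => h t ht.1)

section Dmu

variable {μ n : Measure ℝ} {s t : ℝ}

lemma measurable_inv_measure_Ici : Measurable fun u : ℝ => (n (Ici u))⁻¹ :=
  Antitone.measurable (fun _ _ h => measure_mono (Ici_subset_Ici.2 h)) |>.inv

lemma Dmu_mono : Monotone (Dmu μ n) := fun _ _ h =>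
  lintegral_mono_set (Icc_subset_Icc_right h)

lemma Dmu_ne_top [IsFiniteMeasure μ] (hn : n (Ici s) ≠ 0) : Dmu μ n s ≠ ⊤ := by
  have hbound : Dmu μ n s ≤ (n (Ici s))⁻¹ * μ (Icc 0 s) := by
    calc Dmu μ n s ≤ ∫⁻ _ in Icc (0 : ℝ) s, (n (Ici s))⁻¹ ∂μ :=
          setLIntegral_mono measurable_const fun u hu =>
            ENNReal.inv_le_inv.2 (measure_mono (Ici_subset_Ici.2 hu.2))
      _ = (n (Ici s))⁻¹ * μ (Icc 0 s) := setLIntegral_const _ _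
  exact ne_top_of_le_ne_top (ENNReal.mul_ne_top (ENNReal.inv_ne_top.2 hn) (measure_ne_top μ _))
    hbound

lemma Dmu_eq_add_lintegral_Ioc (hs : 0 ≤ s) (hst : s ≤ t) :
    Dmu μ n t = Dmu μ n s + ∫⁻ u in Ioc s t, (n (Ici u))⁻¹ ∂μ := by
  rw [Dmu, Dmu, ← lintegral_union measurableSet_Ioc
    (disjoint_left.2 fun _ hx hx' => hx'.1.not_ge hx.2),
    Icc_union_Ioc_eq_Icc hs hst]

lemma measure_Ioc_eq_zero_of_Dmu_le (hnfin : ∀ u, 0 < u → n (Ici u) < ⊤) (hs : 0 ≤ s)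
    (hfin : Dmu μ n s ≠ ⊤) (hst : s ≤ t) (hle : Dmu μ n t ≤ Dmu μ n s) : μ (Ioc s t) = 0 := by
  have hzero : ∫⁻ u in Ioc s t, (n (Ici u))⁻¹ ∂μ = 0 := by
    refine nonpos_iff_eq_zero.1 (ENNReal.le_of_add_le_add_left hfin ?_)
    rwa [add_zero, ← Dmu_eq_add_lintegral_Ioc hs hst]
  rw [setLIntegral_eq_zero_iff measurableSet_Ioc measurable_inv_measure_Ici] at hzero
  refine measure_eq_zero_iff_ae_notMem.2 (hzero.mono fun u hu hmem => ?_)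
  exact ENNReal.inv_ne_zero.2 (hnfin u (hs.trans_lt hmem.1)).ne (hu hmem)

lemma lt_of_mem_DinvSet_Dmu {y : ℝ} (hy : y ∈ DinvSet μ n (Dmu μ n s)) : s < y :=
  lt_of_not_ge fun hys => (Dmu_mono hys).not_gt hy.2

lemma measure_Ioc_eq_zero_of_notMem_DinvSet_Dmu (hnfin : ∀ u, 0 < u → n (Ici u) < ⊤)
    (hs : 0 ≤ s) (hfin : Dmu μ n s ≠ ⊤) (hst : s ≤ t) (ht : t ∉ DinvSet μ n (Dmu μ n s)) :
    μ (Ioc s t) = 0 :=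
  measure_Ioc_eq_zero_of_Dmu_le hnfin hs hfin hst (not_lt.1 fun hlt => ht ⟨hs.trans hst, hlt⟩)

lemma measure_Ici_sInf_DinvSet_Dmu [NullSingletonClass μ] (hnfin : ∀ u, 0 < u → n (Ici u) < ⊤)
    (hs : 0 ≤ s) (hfin : Dmu μ n s ≠ ⊤) (hne : (DinvSet μ n (Dmu μ n s)).Nonempty) :
    μ (Ici (sInf (DinvSet μ n (Dmu μ n s)))) = μ (Ici s) := by
  set r := sInf (DinvSet μ n (Dmu μ n s))
  have hbdd : BddBelow (DinvSet μ n (Dmu μ n s)) := ⟨s, fun _ hy => (lt_of_mem_DinvSet_Dmu hy).le⟩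
  have hsr : s ≤ r := le_csInf hne fun _ hy => (lt_of_mem_DinvSet_Dmu hy).le
  have hflat : μ (Ioo s r) = 0 := measure_Ioo_eq_zero_of_forall_Ioc fun t ht =>
    measure_Ioc_eq_zero_of_notMem_DinvSet_Dmu hnfin hs hfin ht.1.le
      fun hmem => (csInf_le hbdd hmem).not_gt ht.2
  refine le_antisymm (measure_mono (Ici_subset_Ici.2 hsr)) ?_
  calc μ (Ici s) = μ (Ioi s) := (measure_congr Ioi_ae_eq_Ici).symm
    _ ≤ μ (Ioo s r) + μ (Ici r) :=
        (measure_mono Ioi_subset_Ioo_union_Ici).trans (measure_union_le _ _)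
    _ = μ (Ici r) := by rw [hflat, zero_add]

lemma measure_Ici_eq_zero_of_DinvSet_Dmu_eq_empty [NullSingletonClass μ]
    (hnfin : ∀ u, 0 < u → n (Ici u) < ⊤) (hs : 0 ≤ s) (hfin : Dmu μ n s ≠ ⊤)
    (hemp : DinvSet μ n (Dmu μ n s) = ∅) : μ (Ici s) = 0 := by
  rw [← measure_congr Ioi_ae_eq_Ici]
  exact measure_Ioi_eq_zero_of_forall_Ioc fun t hst =>
    measure_Ioc_eq_zero_of_notMem_DinvSet_Dmu hnfin hs hfin hst.le (hemp ▸ notMem_empty t)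

lemma mubarDinv_Dmu [IsFiniteMeasure μ] [NullSingletonClass μ] (hnfin : ∀ u, 0 < u → n (Ici u) < ⊤)
    (hs : 0 ≤ s) (hn : n (Ici s) ≠ 0) :
    mubarDinv μ n (Dmu μ n s) = (μ (Ici s)).toReal := by
  have hfin := Dmu_ne_top (μ := μ) hn
  rw [mubarDinv]
  split_ifs with hne
  · rw [measure_Ici_sInf_DinvSet_Dmu hnfin hs hfin hne]
  · rw [measure_Ici_eq_zero_of_DinvSet_Dmu_eq_empty hnfin hs hfin
      (not_nonempty_iff_eq_empty.1 hne), ENNReal.toReal_zero]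

end Dmu

section Symmetric

variable {μ n : Measure ℝ} [μ.IsNegInvariant] [n.IsNegInvariant]

lemma Gmu_eq_Dmu_neg (x : ℝ) : Gmu μ n x = Dmu μ n (-x) := by
  rw [Gmu, Dmu, setLIntegral_Icc_eq_neg, neg_zero]
  simp_rw [← measure_Ici_eq_measure_Iic_neg]

lemma GinvSet_eq_neg_DinvSet (v : ℝ≥0∞) : GinvSet μ n v = -DinvSet μ n v := by
  ext x
  simp [GinvSet, DinvSet, Gmu_eq_Dmu_neg]

variable [IsProbabilityMeasure μ] [NullSingletonClass μ]

lemma mubarGinv_eq_one_sub_mubarDinv (v : ℝ≥0∞) : mubarGinv μ n v = 1 - mubarDinv μ n v := by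
  rw [mubarGinv, mubarDinv, GinvSet_eq_neg_DinvSet, nonempty_neg]
  split_ifs
  · rw [Real.sSup_neg, measure_Ici_eq_measure_Iic_neg, neg_neg, toReal_measure_Iic_eq_one_sub]
  · rw [sub_zero]

lemma psiMinusIntegrand_eq_psiPlusIntegrand_neg (s : ℝ) :
    psiMinusIntegrand μ n s = psiPlusIntegrand μ n (-s) := by
  have hμ : (μ (Ici s)).toReal = 1 - (μ (Ici (-s))).toReal := by
    rw [measure_Ici_eq_measure_Iic_neg s, toReal_measure_Iic_eq_one_sub]
  rw [psiMinusIntegrand, psiPlusIntegrand, Gmu_eq_Dmu_neg, mubarGinv_eq_one_sub_mubarDinv, hμ,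
    measure_Ici_eq_measure_Iic_neg (m := n) (-s), neg_neg]
  ring_nf

lemma psiMinus_eq_psiPlus (y : ℝ) : psiMinus μ n y = psiPlus μ n y := by
  rw [psiMinus, setLIntegral_Icc_eq_neg, neg_zero, neg_neg]
  simp_rw [psiMinusIntegrand_eq_psiPlusIntegrand_neg, neg_neg]
  rfl

lemma psiPlusIntegrand_eq (hnfin : ∀ u, 0 < u → n (Ici u) < ⊤) {s : ℝ} (hs : 0 ≤ s) :
    psiPlusIntegrand μ n s = (2 * μ (Ici s) * n (Ici s))⁻¹ := by
  by_cases hn : n (Ici s) = 0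
  · simp [psiPlusIntegrand, hn]
  rw [psiPlusIntegrand, mubarGinv_eq_one_sub_mubarDinv, mubarDinv_Dmu hnfin hs hn,
    show ∀ a : ℝ, 1 + a - (1 - a) = 2 * a by intro a; ring,
    ENNReal.ofReal_mul zero_le_two, ENNReal.ofReal_toReal (measure_ne_top μ _),
    ENNReal.ofReal_ofNat, mul_comm]

end Symmetric

theorem symmetricCaseSimplification_general
    (μ n : MeasureTheory.Measure ℝ) [MeasureTheory.IsProbabilityMeasure μ]
    (hatomless : ∀ x : ℝ, μ {x} = 0)
    (hnfin : ∀ s : ℝ, 0 < s → n (Set.Ici s) < ⊤ ∧ n (Set.Iic (-s)) < ⊤)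
    (hμsym : MeasureTheory.Measure.map (fun x : ℝ => -x) μ = μ)
    (hnsym : MeasureTheory.Measure.map (fun x : ℝ => -x) n = n) :
    ((⨆ y : ℝ, Dmu μ n y) = (⨆ x : ℝ, Gmu μ n x)) ∧
    (∀ y : ℝ, 0 ≤ y →
      psiPlus μ n y = (∫⁻ s in Set.Icc (0 : ℝ) y, (2 * μ (Set.Ici s) * n (Set.Ici s))⁻¹ ∂μ) ∧
      psiMinus μ n y =
        ∫⁻ s in Set.Icc (0 : ℝ) y, (2 * μ (Set.Ici s) * n (Set.Ici s))⁻¹ ∂μ) := by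
  have : NullSingletonClass μ := ⟨hatomless⟩
  have : μ.IsNegInvariant := ⟨hμsym⟩
  have : n.IsNegInvariant := ⟨hnsym⟩
  have hpsiPlus (y : ℝ) :
      psiPlus μ n y = ∫⁻ s in Icc (0 : ℝ) y, (2 * μ (Ici s) * n (Ici s))⁻¹ ∂μ :=
    setLIntegral_congr_fun measurableSet_Icc fun s hs =>
      psiPlusIntegrand_eq (fun u hu => (hnfin u hu).1) hs.1
  refine ⟨?_, fun y _ => ⟨hpsiPlus y, (psiMinus_eq_psiPlus y).trans (hpsiPlus y)⟩⟩
  simp_rw [Gmu_eq_Dmu_neg]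
  exact ((Equiv.neg ℝ).iSup_comp (g := Dmu μ n)).symm

/-- Symmetric case simplification: if `μ` and `n` are both invariant
under `x ↦ −x`, then `D_μ(∞) = G_μ(−∞)` holds automatically, and for every `y ≥ 0`
one has `ψ₊(y) = ψ₋(y) = ∫_{[0,y]} (2·μ̄(s)·n([s,∞)))⁻¹ dμ(s)`. -/
theorem symmetricCaseSimplification
    (μ n : MeasureTheory.Measure ℝ) [MeasureTheory.IsProbabilityMeasure μ]
    (hatomless : ∀ x : ℝ, μ {x} = 0)
    (hneg : 0 < μ (Set.Iio (0 : ℝ))) (hpos : 0 < μ (Set.Ioi (0 : ℝ)))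
    (hnfin : ∀ s : ℝ, 0 < s → n (Set.Ici s) < ⊤ ∧ n (Set.Iic (-s)) < ⊤)
    (hnsupp : ∀ x ∈ measSupport μ, 0 < n (Set.Iic x) ∧ 0 < n (Set.Ici x))
    (hμsym : MeasureTheory.Measure.map (fun x : ℝ => -x) μ = μ)
    (hnsym : MeasureTheory.Measure.map (fun x : ℝ => -x) n = n) :
    ((⨆ y : ℝ, Dmu μ n y) = (⨆ x : ℝ, Gmu μ n x)) ∧
    (∀ y : ℝ, 0 ≤ y →
      psiPlus μ n y = (∫⁻ s in Set.Icc (0 : ℝ) y, (2 * μ (Set.Ici s) * n (Set.Ici s))⁻¹ ∂μ) ∧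
      psiMinus μ n y =
        ∫⁻ s in Set.Icc (0 : ℝ) y, (2 * μ (Set.Ici s) * n (Set.Ici s))⁻¹ ∂μ) :=
  symmetricCaseSimplification_general μ n hatomless hnfin hμsym hnsym
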